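/- Let p ≥ 1, let n : Fin p → ℕ with n k ≥ 1 for all k, let ι := Σ k, Fin (n k), let λ : Fin p → ℝ be injective, let u be a unitary matrix in M_ι(ℂ), and set H := u · blockDiagonal'(fun k => (λ k : ℂ) • 1_{n k}) · u†. Then the subgroup { V ∈ U(ι) : V H = H V } of the unitary group of M_ι(ℂ) is isomorphic, as a group, to the direct product ∏_{k} U(n k) of the unitary groups of the blocks. -/

import Mathlib

/-!
Conjugation by `u` is a ⋆-automorphism of the matrix algebra, so it carries the commutant of
`H₀ = ⊕ₖ λₖ 1_{nₖ}` onto that of `u H₀ u†`, and it suffices to treat `H₀ = diagonal (λ_{x.1})`.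
Comparing entries of `V H₀ = H₀ V` gives `(λₗ - λₖ) V_{(k,i),(l,j)} = 0`, so since the `λₖ` are
distinct, `V` commutes with `H₀` exactly when it is block diagonal; and a block-diagonal matrix is
unitary exactly when each block is. Hence taking diagonal blocks identifies `𝒯_H` with `∏ₖ U(nₖ)`.
-/

open Matrix

/-- The subgroup of the unitary group consisting of the unitaries commuting with a fixed
matrix `H` (the thermodynamic group `𝒯_H`). -/
def thermodynamicGroup {ι : Type*} [Fintype ι] [DecidableEq ι] (H : Matrix ι ι ℂ) :
    Subgroup (Matrix.unitaryGroup ι ℂ) where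
  carrier := {V | (V : Matrix ι ι ℂ) * H = H * (V : Matrix ι ι ℂ)}
  one_mem' := by simp
  mul_mem' := by
    intro a b ha hb
    simp only [Set.mem_setOf_eq, Submonoid.coe_mul] at *
    rw [mul_assoc, hb, ← mul_assoc, ha, mul_assoc]
  inv_mem' := by
    intro a ha
    simp only [Set.mem_setOf_eq] at *
    have h1 : (a⁻¹ : Matrix.unitaryGroup ι ℂ) = (star (a : Matrix ι ι ℂ) : Matrix ι ι ℂ) := rfl
    rw [h1]
    calc star (a : Matrix ι ι ℂ) * H
        = star (a : Matrix ι ι ℂ) * H * ((a : Matrix ι ι ℂ) * star (a : Matrix ι ι ℂ)) := by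
          rw [a.2.2, mul_one]
      _ = star (a : Matrix ι ι ℂ) * ((a : Matrix ι ι ℂ) * H) * star (a : Matrix ι ι ℂ) := by
          rw [ha]; noncomm_ring
      _ = H * star (a : Matrix ι ι ℂ) := by
          rw [← mul_assoc, a.2.1, one_mul]

namespace Matrix

variable {o : Type*} {m : o → Type*} {α : Type*}

theorem commute_blockDiagonal'_smul_one_iff [Fintype o] [DecidableEq o] [∀ k, Fintype (m k)]
    [∀ k, DecidableEq (m k)] [CommRing α] [NoZeroDivisors α] {d : o → α}
    (hd : Function.Injective d) {M : Matrix (Σ k, m k) (Σ k, m k) α} :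
    Commute M (blockDiagonal' fun k => d k • (1 : Matrix (m k) (m k) α)) ↔
      M = blockDiagonal' (blockDiag' M) := by
  have hD : (blockDiagonal' fun k => d k • (1 : Matrix (m k) (m k) α)) =
      diagonal fun x => d x.1 := by
    simp_rw [smul_one_eq_diagonal]
    exact blockDiagonal'_diagonal _
  constructor
  · intro hM
    ext ⟨k, i⟩ ⟨l, j⟩
    obtain rfl | hkl := eq_or_ne k l
    · rw [blockDiagonal'_apply_eq, blockDiag'_apply]
    · have hentry := congrFun₂ hM.eq ⟨k, i⟩ ⟨l, j⟩
      rw [hD, mul_diagonal, diagonal_mul] at hentry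
      have hsub : M ⟨k, i⟩ ⟨l, j⟩ * (d l - d k) = 0 := by linear_combination hentry
      rw [blockDiagonal'_apply_ne _ _ _ hkl]
      exact (mul_eq_zero.mp hsub).resolve_right (sub_ne_zero.mpr (hd.ne hkl.symm))
  · intro hM
    rw [hM]
    exact (Pi.commute_iff.mpr fun k => (Commute.one_right _).smul_right _).map
      (blockDiagonal'RingHom m α)

section Unitary

variable [Fintype o] [DecidableEq o] [∀ k, Fintype (m k)] [∀ k, DecidableEq (m k)]
  [CommRing α] [StarRing α]

theorem blockDiagonal'_mem_unitaryGroup_iff {M : ∀ k, Matrix (m k) (m k) α} :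
    blockDiagonal' M ∈ unitaryGroup (Σ k, m k) α ↔ ∀ k, M k ∈ unitaryGroup (m k) α := by
  simp only [mem_unitaryGroup_iff, star_eq_conjTranspose, blockDiagonal'_conjTranspose,
    ← blockDiagonal'_mul, ← blockDiagonal'_one, blockDiagonal'_inj, funext_iff, Pi.one_apply]

variable (m α) in
def blockDiagonalUnitary : (∀ k, unitaryGroup (m k) α) →* unitaryGroup (Σ k, m k) α where
  toFun W := ⟨blockDiagonal' fun k => (W k : Matrix (m k) (m k) α),
    blockDiagonal'_mem_unitaryGroup_iff.mpr fun k => (W k).2⟩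
  map_one' := Subtype.ext blockDiagonal'_one
  map_mul' W W' := Subtype.ext <| blockDiagonal'_mul (fun k => (W k : Matrix (m k) (m k) α))
    fun k => (W' k : Matrix (m k) (m k) α)

@[simp]
theorem coe_blockDiagonalUnitary (W : ∀ k, unitaryGroup (m k) α) :
    (blockDiagonalUnitary m α W : Matrix (Σ k, m k) (Σ k, m k) α) =
      blockDiagonal' fun k => (W k : Matrix (m k) (m k) α) :=
  rfl

theorem blockDiagonalUnitary_injective : Function.Injective (blockDiagonalUnitary m α) := by
  intro W W' h
  have hblocks := congrArg Subtype.val h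
  rw [coe_blockDiagonalUnitary, coe_blockDiagonalUnitary, blockDiagonal'_inj] at hblocks
  exact funext fun k => Subtype.ext (congrFun hblocks k)

theorem mem_range_blockDiagonalUnitary {V : unitaryGroup (Σ k, m k) α} :
    V ∈ (blockDiagonalUnitary m α).range ↔
      (V : Matrix (Σ k, m k) (Σ k, m k) α) =
        blockDiagonal' (blockDiag' (V : Matrix (Σ k, m k) (Σ k, m k) α)) := by
  constructor
  · rintro ⟨W, rfl⟩
    rw [coe_blockDiagonalUnitary, blockDiag'_blockDiagonal']
  · intro hV
    have hblocks := blockDiagonal'_mem_unitaryGroup_iff.mp (hV ▸ V.2)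
    exact ⟨fun k => ⟨_, hblocks k⟩, Subtype.ext hV.symm⟩

end Unitary

end Matrix

section Thermodynamic

variable {ι : Type*} [Fintype ι] [DecidableEq ι]

theorem mem_thermodynamicGroup {H : Matrix ι ι ℂ} {V : unitaryGroup ι ℂ} :
    V ∈ thermodynamicGroup H ↔ Commute (V : Matrix ι ι ℂ) H :=
  Iff.rfl

theorem thermodynamicGroup_unitary_conj (u : unitaryGroup ι ℂ) (H : Matrix ι ι ℂ) :
    thermodynamicGroup ((u : Matrix ι ι ℂ) * H * star (u : Matrix ι ι ℂ)) =
      (thermodynamicGroup H).map (MulAut.conj u : unitaryGroup ι ℂ →* unitaryGroup ι ℂ) := by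
  ext W
  set φ := Unitary.conjStarAlgAut ℂ (Matrix ι ι ℂ) u
  have hW : (W : Matrix ι ι ℂ) = φ (φ.symm W) := (φ.apply_symm_apply _).symm
  have hH : (u : Matrix ι ι ℂ) * H * star (u : Matrix ι ι ℂ) = φ H := rfl
  rw [Subgroup.map_equiv_eq_comap_symm, Subgroup.mem_comap, mem_thermodynamicGroup,
    mem_thermodynamicGroup, hW, hH]
  exact commute_map_iff (f := φ) (EquivLike.injective φ)

theorem thermodynamicGroup_blockDiagonal'_smul_one {o : Type*} {m : o → Type*} [Fintype o]
    [DecidableEq o] [∀ k, Fintype (m k)] [∀ k, DecidableEq (m k)] {lam : o → ℝ}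
    (hlam : Function.Injective lam) :
    thermodynamicGroup (blockDiagonal' fun k => (lam k : ℂ) • (1 : Matrix (m k) (m k) ℂ)) =
      (blockDiagonalUnitary m ℂ).range := by
  ext V
  rw [mem_thermodynamicGroup, commute_blockDiagonal'_smul_one_iff (d := fun k => (lam k : ℂ))
    (Complex.ofReal_injective.comp hlam), mem_range_blockDiagonalUnitary]

end Thermodynamic

theorem thermodynamicGroup_iso_prod_unitaryGroups (p : ℕ)
    (n : Fin p → ℕ) (lam : Fin p → ℝ) (hlam : Function.Injective lam)
    (u : Matrix.unitaryGroup (Σ k, Fin (n k)) ℂ) :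
    Nonempty
      (thermodynamicGroup
          ((u : Matrix (Σ k, Fin (n k)) (Σ k, Fin (n k)) ℂ) *
            Matrix.blockDiagonal'
              (fun k => (lam k : ℂ) • (1 : Matrix (Fin (n k)) (Fin (n k)) ℂ)) *
            star (u : Matrix (Σ k, Fin (n k)) (Σ k, Fin (n k)) ℂ))
        ≃* (∀ k, Matrix.unitaryGroup (Fin (n k)) ℂ)) :=
  ⟨(MulEquiv.subgroupCongr (thermodynamicGroup_unitary_conj u _)).trans <|
    ((MulAut.conj u).subgroupMap _).symm.trans <|
    (MulEquiv.subgroupCongr (thermodynamicGroup_blockDiagonal'_smul_one hlam)).trans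
      (MonoidHom.ofInjective blockDiagonalUnitary_injective).symm⟩
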